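/- arXiv:2306.17737 — 11 statements merged into one kernel-verified Lean document; each statement's English description precedes it below -/
import Mathlib

section
/- Let E be a real Hilbert space, let λ ≥ 0 and ε ≥ 0, and let G : E → ℝ be lower semicontinuous and λ-strongly convex. Let u ∈ E and p ∈ ∂_ε G(u). Then for every θ ∈ [0,1) and every v ∈ E, G(v) ≥ G(u) + ⟪p, v − u⟫ + (θλ/2)·‖u − v‖² − ε/(1 − θ). -/
open RealInnerProductSpace

lemma norm_combo_aux {E : Type*} [NormedAddCommGroup E] [InnerProductSpace ℝ E]
    (u v : E) (θ : ℝ) :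
    θ * ‖u‖ ^ 2 + (1 - θ) * ‖v‖ ^ 2 - ‖θ • u + (1 - θ) • v‖ ^ 2
      = θ * (1 - θ) * ‖u - v‖ ^ 2 := by
  have h1 : ‖θ • u + (1 - θ) • v‖ ^ 2
      = ‖θ • u‖ ^ 2 + 2 * ⟪θ • u, (1 - θ) • v⟫ + ‖(1 - θ) • v‖ ^ 2 :=
    norm_add_sq_real _ _
  have h2 : ‖u - v‖ ^ 2 = ‖u‖ ^ 2 - 2 * ⟪u, v⟫ + ‖v‖ ^ 2 := norm_sub_sq_real _ _
  have h3 : ⟪θ • u, (1 - θ) • v⟫ = θ * ((1 - θ) * ⟪u, v⟫) := by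
    rw [real_inner_smul_left, real_inner_smul_right]
  have h4 : ‖θ • u‖ ^ 2 = θ ^ 2 * ‖u‖ ^ 2 := by
    rw [norm_smul, mul_pow, Real.norm_eq_abs, sq_abs]
  have h5 : ‖(1 - θ) • v‖ ^ 2 = (1 - θ) ^ 2 * ‖v‖ ^ 2 := by
    rw [norm_smul, mul_pow, Real.norm_eq_abs, sq_abs]
  rw [h1, h2, h3, h4, h5]; ring

/-- ε-subgradient inequality for strongly convex functions (Lemma 3.4 of the paper). -/
theorem eps_subgradient_strong_convexity
    {E : Type*} [NormedAddCommGroup E] [InnerProductSpace ℝ E] [CompleteSpace E]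
    (lam ε : ℝ) (hlam : 0 ≤ lam) (hε : 0 ≤ ε) (G : E → ℝ)
    (hlsc : LowerSemicontinuous G)
    (hsc : ConvexOn ℝ Set.univ (fun v => G v - lam / 2 * ‖v‖ ^ 2))
    (u p : E) (hp : ∀ y : E, G y ≥ G u + ⟪p, y - u⟫ - ε) :
    ∀ θ : ℝ, 0 ≤ θ → θ < 1 → ∀ v : E,
      G v ≥ G u + ⟪p, v - u⟫ + θ * lam / 2 * ‖u - v‖ ^ 2 - ε / (1 - θ) := by
  intro θ hθ0 hθ1 v
  have ht : (0 : ℝ) < 1 - θ := by linarith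
  set y : E := θ • u + (1 - θ) • v with hy
  have hconv := hsc.2 (Set.mem_univ u) (Set.mem_univ v) hθ0 (le_of_lt ht) (by ring)
  simp only [smul_eq_mul, ← hy] at hconv
  -- hconv : G y - lam/2 * ‖y‖^2 ≤ θ*(G u - lam/2‖u‖^2) + (1-θ)*(G v - lam/2‖v‖^2)
  have hyu : y - u = (1 - θ) • (v - u) := by
    rw [hy]; rw [smul_sub]; module
  have hsub := hp y
  rw [hyu, real_inner_smul_right] at hsub
  have hnorm := norm_combo_aux u v θ
  -- combine
  have key : (1 - θ) * G v ≥ (1 - θ) * G u + (1 - θ) * ⟪p, v - u⟫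
      + lam / 2 * (θ * (1 - θ) * ‖u - v‖ ^ 2) - ε := by
    nlinarith [hconv, hsub, hnorm]
  have hεd : ε / (1 - θ) * (1 - θ) = ε := by field_simp
  rw [ge_iff_le, ← sub_nonneg]
  have : 0 ≤ (G v - (G u + ⟪p, v - u⟫ + θ * lam / 2 * ‖u - v‖ ^ 2 - ε / (1 - θ))) * (1 - θ) := by
    nlinarith [key, hεd]
  exact nonneg_of_mul_nonneg_left this ht
end

section
/- Let E be a real Hilbert space, let G* : E → ℝ be lower semicontinuous and λ*-strongly convex with λ* ≥ 0, let ε ≥ 0, γ > 0 and θ ∈ [0,1). Let x̄, x̂ ∈ E, set ŷ := (x̄ − x̂)/γ, and assume x̂ ∈ ∂_ε G*(ŷ), i.e. G*(q) ≥ G*(ŷ) + ⟪x̂, q − ŷ⟫ − ε for all q ∈ E. Then for all x, y ∈ E: ‖x̂ − x‖² ≤ ‖x̄ − x‖² − γ(θλ* + γ)‖ŷ − y‖² + γ²‖y‖² + 2γ·( ⟪ŷ, x⟫ − ⟪x̄, y⟫ + G*(y) − G*(ŷ) + ε/(1 − θ) ). -/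
open RealInnerProductSpace

/-- Key pointwise inequality for the inexact proximal step (Lemma 3.9 of the paper). -/
theorem inexact_prox_step_inequality
    {E : Type*} [NormedAddCommGroup E] [InnerProductSpace ℝ E] [CompleteSpace E]
    (Gs : E → ℝ) (lams ε γ θ : ℝ)
    (hlams : 0 ≤ lams) (hε : 0 ≤ ε) (hγ : 0 < γ) (hθ0 : 0 ≤ θ) (hθ1 : θ < 1)
    (hlsc : LowerSemicontinuous Gs)
    (hsc : ConvexOn ℝ Set.univ (fun v => Gs v - lams / 2 * ‖v‖ ^ 2))
    (xbar xhat yhat : E) (hyhat : yhat = (1 / γ) • (xbar - xhat))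
    (hsub : ∀ q : E, Gs q ≥ Gs yhat + ⟪xhat, q - yhat⟫ - ε) :
    ∀ x y : E,
      ‖xhat - x‖ ^ 2 ≤ ‖xbar - x‖ ^ 2 - γ * (θ * lams + γ) * ‖yhat - y‖ ^ 2
        + γ ^ 2 * ‖y‖ ^ 2
        + 2 * γ * (⟪yhat, x⟫ - ⟪xbar, y⟫ + Gs y - Gs yhat + ε / (1 - θ)) := by
  intro x y
  have h1θ : (0:ℝ) < 1 - θ := by linarith
  have hx : xhat = xbar - γ • yhat := by
    rw [hyhat, smul_smul]
    rw [mul_one_div, div_self hγ.ne', one_smul]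
    abel
  set q : E := θ • yhat + (1 - θ) • y with hq
  have hconv := hsc.2 (Set.mem_univ yhat) (Set.mem_univ y) hθ0 h1θ.le (by ring)
  simp only [smul_eq_mul] at hconv
  rw [← hq] at hconv
  have hsubq := hsub q
  have e1 : ‖q‖ ^ 2 = θ ^ 2 * ‖yhat‖ ^ 2 + 2 * (θ * (1 - θ)) * ⟪yhat, y⟫
      + (1 - θ) ^ 2 * ‖y‖ ^ 2 := by
    rw [hq, norm_add_sq_real, norm_smul, norm_smul, real_inner_smul_left,
      real_inner_smul_right]
    rw [Real.norm_eq_abs, Real.norm_eq_abs, abs_of_nonneg hθ0, abs_of_nonneg h1θ.le]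
    ring
  have e2 : ‖yhat - y‖ ^ 2 = ‖yhat‖ ^ 2 - 2 * ⟪yhat, y⟫ + ‖y‖ ^ 2 := by
    rw [norm_sub_sq_real]
  have hqy : q - yhat = (1 - θ) • (y - yhat) := by
    rw [hq]; module
  have hIq : ⟪xhat, q - yhat⟫ = (1 - θ) * ⟪xhat, y - yhat⟫ := by
    rw [hqy, real_inner_smul_right]
  have key : Gs yhat + ⟪xhat, y - yhat⟫ + lams * θ / 2 * ‖yhat - y‖ ^ 2
      - ε / (1 - θ) ≤ Gs y := by
    rw [hIq] at hsubq
    have hεd : (1 - θ) * (ε / (1 - θ)) = ε := by field_simp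
    have h2 : (1 - θ) * (Gs yhat + ⟪xhat, y - yhat⟫ + lams * θ / 2 * ‖yhat - y‖ ^ 2
        - ε / (1 - θ)) ≤ (1 - θ) * Gs y := by
      rw [e1] at hconv
      rw [e2]
      linarith [hconv, hsubq, hεd]
    exact le_of_mul_le_mul_left h2 h1θ
  have key2 : 2 * γ * (Gs yhat + ⟪xhat, y - yhat⟫ + lams * θ / 2 * ‖yhat - y‖ ^ 2
      - ε / (1 - θ)) ≤ 2 * γ * Gs y :=
    mul_le_mul_of_nonneg_left key (by positivity)
  have hI : ⟪xhat, y - yhat⟫ = ⟪xbar, y⟫ - ⟪xbar, yhat⟫ - γ * ⟪yhat, y⟫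
      + γ * ‖yhat‖ ^ 2 := by
    rw [hx]
    simp [inner_sub_left, inner_sub_right, real_inner_smul_left,
      real_inner_self_eq_norm_sq, real_inner_comm y yhat]
    ring
  have hN : ‖xhat - x‖ ^ 2 = ‖xbar - x‖ ^ 2 - 2 * γ * ⟪xbar, yhat⟫
      + 2 * γ * ⟪yhat, x⟫ + γ ^ 2 * ‖yhat‖ ^ 2 := by
    have : xhat - x = (xbar - x) - γ • yhat := by rw [hx]; abel
    rw [this, norm_sub_sq_real, inner_smul_right, norm_smul,
      inner_sub_left, real_inner_comm x yhat]
    rw [Real.norm_eq_abs, abs_of_nonneg hγ.le]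
    ring
  rw [hI, e2] at key2
  rw [hN, e2]
  linarith [key2]
end

section
/- Let λ > 0, γ > 0 with λγ ≤ 1, C ≥ 0, let (ε_k)_{k≥0} be a nonincreasing sequence of nonnegative real numbers, and let (W_k)_{k≥0} be a sequence of nonnegative real numbers satisfying W_{k+1} ≤ (1 − λγ)·W_k + γ²C + 2γε_k for all k ≥ 0. Then for every K ≥ 1: W_K ≤ (1 − λγ)^K · W_0 + (γ/λ)·C + (2/(Kλ))·∑_{k=0}^{K−1} ε_k. -/
open Finset

/-!
Unrolling the recursion with `r = 1 - λγ` gives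
`W_K ≤ r^K W_0 + (∑_{k<K} r^k) γ²C + 2γ ∑_{k<K} r^k ε_{K-1-k}`.
The geometric sum is at most `1/(λγ)`. In the last sum the weights `r^k` decrease while the
reflected errors `ε_{K-1-k}` increase, so Chebyshev's sum inequality bounds it by
`(1/K) (∑ r^k)(∑ ε_k) ≤ (1/(Kλγ)) ∑ ε_k`.
-/

theorem le_pow_mul_add_sum_of_le_mul_add {α : Type*} [Semiring α] [PartialOrder α]
    [IsOrderedRing α] {r : α} {u b : ℕ → α} (hr : 0 ≤ r) (h : ∀ k, u (k + 1) ≤ r * u k + b k) :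
    ∀ n, u n ≤ r ^ n * u 0 + ∑ k ∈ range n, r ^ k * b (n - 1 - k)
  | 0 => by simp
  | n + 1 =>
    calc u (n + 1) ≤ r * u n + b n := h n
      _ ≤ r * (r ^ n * u 0 + ∑ k ∈ range n, r ^ k * b (n - 1 - k)) + b n := by
        gcongr; exact le_pow_mul_add_sum_of_le_mul_add hr h n
      _ = r ^ (n + 1) * u 0 + ∑ k ∈ range (n + 1), r ^ k * b (n + 1 - 1 - k) := by
        simp only [sum_range_succ', mul_add, mul_sum, pow_succ', mul_assoc, pow_zero, one_mul,
          add_assoc, Nat.add_sub_cancel, Nat.sub_zero, Nat.sub_sub, Nat.add_comm 1]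

theorem Antitone.card_mul_sum_mul_reflect_le {α : Type*} [Semiring α] [LinearOrder α]
    [IsStrictOrderedRing α] [ExistsAddOfLE α] {f g : ℕ → α} (hf : Antitone f) (hg : Antitone g)
    (n : ℕ) :
    (n : α) * ∑ k ∈ range n, f k * g (n - 1 - k) ≤ (∑ k ∈ range n, f k) * ∑ k ∈ range n, g k := by
  have hreflect : Monotone fun k ↦ g (n - 1 - k) := hg.comp fun a b hab ↦ by omega
  have := ((hf.antivary hreflect).antivaryOn (range n)).card_mul_sum_le_sum_mul_sum
  rwa [card_range, sum_range_reflect g n] at this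

theorem geom_sum_one_sub_le_inv {α : Type*} [Field α] [LinearOrder α] [IsStrictOrderedRing α]
    {q : α} (hq : 0 < q) (hq1 : q ≤ 1) (n : ℕ) : ∑ k ∈ range n, (1 - q) ^ k ≤ q⁻¹ := by
  have := geom_sum_Ico_le_of_lt_one (m := 0) (n := n) (sub_nonneg.2 hq1) (sub_lt_self 1 hq)
  rwa [← range_eq_Ico, pow_zero, sub_sub_cancel, one_div] at this

theorem card_mul_sum_one_sub_pow_mul_reflect_le {α : Type*} [Field α] [LinearOrder α]
    [IsStrictOrderedRing α] {q : α} (hq : 0 < q) (hq1 : q ≤ 1) {ε : ℕ → α}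
    (hε₀ : ∀ k, 0 ≤ ε k) (hε : Antitone ε) (n : ℕ) :
    (n : α) * ∑ k ∈ range n, (1 - q) ^ k * ε (n - 1 - k) ≤ q⁻¹ * ∑ k ∈ range n, ε k :=
  ((pow_right_anti₀ (sub_nonneg.2 hq1) (sub_le_self 1 hq.le)).card_mul_sum_mul_reflect_le
    hε n).trans <|
    mul_le_mul_of_nonneg_right (geom_sum_one_sub_le_inv hq hq1 n) (sum_nonneg fun k _ ↦ hε₀ k)

theorem iPGLA_fixed_step_strongly_convex_decreasing_errors_general
    (lam γ C : ℝ) (hlam : 0 < lam) (hγ : 0 < γ) (hlamγ : lam * γ ≤ 1)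
    (hC : 0 ≤ C)
    (ε : ℕ → ℝ) (hεnn : ∀ k, 0 ≤ ε k) (hεanti : Antitone ε)
    (W : ℕ → ℝ)
    (hrec : ∀ k, W (k + 1) ≤ (1 - lam * γ) * W k + γ ^ 2 * C + 2 * γ * ε k) :
    ∀ K : ℕ, 1 ≤ K →
      W K ≤ (1 - lam * γ) ^ K * W 0 + γ / lam * C
              + 2 / (K * lam) * ∑ k ∈ Finset.range K, ε k := by
  intro K hK
  have hq : 0 < lam * γ := mul_pos hlam hγ
  have hKpos : (0 : ℝ) < K := by exact_mod_cast hK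
  have unrolled := le_pow_mul_add_sum_of_le_mul_add (sub_nonneg.2 hlamγ)
    (fun k ↦ (hrec k).trans_eq (add_assoc _ _ _)) K
  have geometric := geom_sum_one_sub_le_inv hq hlamγ K
  have chebyshev : ∑ k ∈ range K, (1 - lam * γ) ^ k * ε (K - 1 - k)
      ≤ (lam * γ)⁻¹ * (∑ k ∈ range K, ε k) / K := by
    rw [le_div_iff₀' hKpos]
    exact card_mul_sum_one_sub_pow_mul_reflect_le hq hlamγ hεnn hεanti K
  calc W K ≤ (1 - lam * γ) ^ K * W 0
        + ∑ k ∈ range K, (1 - lam * γ) ^ k * (γ ^ 2 * C + 2 * γ * ε (K - 1 - k)) := unrolled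
    _ = (1 - lam * γ) ^ K * W 0 + (∑ k ∈ range K, (1 - lam * γ) ^ k) * (γ ^ 2 * C)
        + 2 * γ * ∑ k ∈ range K, (1 - lam * γ) ^ k * ε (K - 1 - k) := by
      simp only [mul_add, sum_add_distrib, ← sum_mul, mul_left_comm _ (2 * γ), ← mul_sum]
      ring
    _ ≤ (1 - lam * γ) ^ K * W 0 + (lam * γ)⁻¹ * (γ ^ 2 * C)
        + 2 * γ * ((lam * γ)⁻¹ * (∑ k ∈ range K, ε k) / K) := by
      gcongr
    _ = _ := by
      field_simp

/-- Real-sequence form of the fixed-step-size convergence theorem for inexact PGLA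
in the strongly convex case with monotonically decreasing proximal errors. -/
theorem iPGLA_fixed_step_strongly_convex_decreasing_errors
    (lam γ C : ℝ) (hlam : 0 < lam) (hγ : 0 < γ) (hlamγ : lam * γ ≤ 1)
    (hC : 0 ≤ C)
    (ε : ℕ → ℝ) (hεnn : ∀ k, 0 ≤ ε k) (hεanti : Antitone ε)
    (W : ℕ → ℝ) (hW : ∀ k, 0 ≤ W k)
    (hrec : ∀ k, W (k + 1) ≤ (1 - lam * γ) * W k + γ ^ 2 * C + 2 * γ * ε k) :
    ∀ K : ℕ, 1 ≤ K →
      W K ≤ (1 - lam * γ) ^ K * W 0 + γ / lam * C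
              + 2 / (K * lam) * ∑ k ∈ Finset.range K, ε k :=
  iPGLA_fixed_step_strongly_convex_decreasing_errors_general lam γ C hlam hγ hlamγ hC ε hεnn hεanti
    W hrec
end

section
/- Let λ > 0, C ≥ 0, M < ∞. Let (γ_k)_{k≥0} be a sequence of positive real numbers such that: γ_k ≤ γ_{k−1} and γ_k ≥ γ_{k−1}/(1 + λ) for all k ≥ 1, λγ_k ≤ 1 for all k, γ_k → 0 as k → ∞, ∑_{k=0}^{∞} γ_k = ∞, and A_K := ∑_{k=0}^{K−1} γ_k · ∏_{l=k+1}^{K−1} (1 − λγ_l) ≤ M for all K ≥ 1. Let (ε_k)_{k≥0} be a nonincreasing sequence of nonnegative real numbers with ε_k → 0, and let (W_k)_{k≥0} be a sequence of nonnegative real numbers satisfying W_{k+1} ≤ (1 − λγ_k)·W_k + γ_k²C + 2γ_k ε_k for all k ≥ 0. Then W_K → 0 as K → ∞. -/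
open Filter Finset

/-!
With `a k = lam * γ k`, the recursion reads `W (k+1) ≤ (1 - a k) * W k + a k * c k` with
`c k = (γ k * C + 2 * ε k) / lam → 0`. Once `c k ≤ δ`, the shifted sequence `W k - δ`
contracts by the factor `1 - a k ∈ [0, 1]`, and the products `∏ (1 - a l) ≤ exp (-∑ a l)`
tend to zero because `∑ a k` diverges. Hence `W k` is eventually below any `δ > 0`.
-/

theorem prod_one_sub_le_exp_neg_sum {ι : Type*} (s : Finset ι) {a : ι → ℝ}
    (ha : ∀ i ∈ s, a i ≤ 1) :
    ∏ i ∈ s, (1 - a i) ≤ Real.exp (-∑ i ∈ s, a i) := by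
  rw [← sum_neg_distrib, Real.exp_sum]
  exact prod_le_prod (fun i hi => sub_nonneg.2 (ha i hi)) fun i _ => by
    linarith [Real.add_one_le_exp (-a i)]

theorem tendsto_prod_Ico_one_sub_atTop_zero {a : ℕ → ℝ} (ha : ∀ k, a k ≤ 1)
    (hsum : Tendsto (fun K => ∑ k ∈ range K, a k) atTop atTop) (n : ℕ) :
    Tendsto (fun K => ∏ k ∈ Ico n K, (1 - a k)) atTop (nhds 0) := by
  have hsum_Ico : Tendsto (fun K => ∑ k ∈ Ico n K, a k) atTop atTop := by
    refine (tendsto_atTop_add_const_right _ (-∑ k ∈ range n, a k) hsum).congr' ?_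
    filter_upwards [eventually_ge_atTop n] with K hK
    rw [sum_Ico_eq_sub _ hK, sub_eq_add_neg]
  exact squeeze_zero (fun K => prod_nonneg fun k _ => sub_nonneg.2 (ha k))
    (fun K => prod_one_sub_le_exp_neg_sum _ fun k _ => ha k)
    (Real.tendsto_exp_atBot.comp (tendsto_neg_atTop_atBot.comp hsum_Ico))

theorem max_zero_le_prod_Ico_one_sub_mul {a V : ℕ → ℝ} {N : ℕ} (ha : ∀ k, a k ≤ 1)
    (hV : ∀ k, N ≤ k → V (k + 1) ≤ (1 - a k) * V k) {K : ℕ} (hK : N ≤ K) :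
    max (V K) 0 ≤ (∏ k ∈ Ico N K, (1 - a k)) * max (V N) 0 := by
  induction K, hK using Nat.le_induction with
  | base => simp
  | succ K hNK ih =>
    have hfac : 0 ≤ 1 - a K := sub_nonneg.2 (ha K)
    rw [prod_Ico_succ_top hNK, mul_right_comm]
    calc max (V (K + 1)) 0 ≤ max (V K) 0 * (1 - a K) := by
          rw [mul_comm]
          exact max_le ((hV K hNK).trans (mul_le_mul_of_nonneg_left (le_max_left _ _) hfac))
            (mul_nonneg hfac (le_max_right _ _))
      _ ≤ _ := mul_le_mul_of_nonneg_right ih hfac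

theorem tendsto_zero_of_le_one_sub_mul_add_mul {a c W : ℕ → ℝ} (ha₀ : ∀ k, 0 ≤ a k)
    (ha₁ : ∀ k, a k ≤ 1) (hsum : Tendsto (fun K => ∑ k ∈ range K, a k) atTop atTop)
    (hc : Tendsto c atTop (nhds 0)) (hW : ∀ k, 0 ≤ W k)
    (hrec : ∀ k, W (k + 1) ≤ (1 - a k) * W k + a k * c k) :
    Tendsto W atTop (nhds 0) := by
  refine tendsto_order.2
    ⟨fun b hb => Eventually.of_forall fun k => hb.trans_le (hW k), fun δ hδ => ?_⟩
  obtain ⟨N, hN⟩ := eventually_atTop.1 ((tendsto_order.1 hc).2 (δ / 2) (half_pos hδ))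
  have hV : ∀ k, N ≤ k → W (k + 1) - δ / 2 ≤ (1 - a k) * (W k - δ / 2) := fun k hk => by
    linarith [hrec k, mul_le_mul_of_nonneg_left (hN k hk).le (ha₀ k)]
  have hP := (tendsto_prod_Ico_one_sub_atTop_zero ha₁ hsum N).mul_const (max (W N - δ / 2) 0)
  rw [zero_mul] at hP
  filter_upwards [eventually_ge_atTop N, (tendsto_order.1 hP).2 (δ / 2) (half_pos hδ)]
    with K hK hPK
  linarith [le_max_left (W K - δ / 2) 0,
    max_zero_le_prod_Ico_one_sub_mul (V := fun k => W k - δ / 2) ha₁ hV hK]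

theorem iPGLA_decaying_step_sizes_general
    (lam C : ℝ) (hlam : 0 < lam)
    (γ : ℕ → ℝ) (hγpos : ∀ k, 0 < γ k)
    (hγstep : ∀ k, lam * γ k ≤ 1)
    (hγ0 : Tendsto γ atTop (nhds 0))
    (hdiv : Tendsto (fun K : ℕ => ∑ k ∈ Finset.range K, γ k) atTop atTop)
    (ε : ℕ → ℝ)
    (hε0 : Tendsto ε atTop (nhds 0))
    (W : ℕ → ℝ) (hW : ∀ k, 0 ≤ W k)
    (hrec : ∀ k, W (k + 1) ≤ (1 - lam * γ k) * W k + (γ k) ^ 2 * C + 2 * γ k * ε k) :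
    Tendsto W atTop (nhds 0) := by
  have hc : Tendsto (fun k => (γ k * C + 2 * ε k) / lam) atTop (nhds 0) := by
    simpa using ((hγ0.mul_const C).add (hε0.const_mul 2)).div_const lam
  refine tendsto_zero_of_le_one_sub_mul_add_mul (a := fun k => lam * γ k)
    (fun k => (mul_pos hlam (hγpos k)).le) hγstep ?_ hc hW fun k => ?_
  · simpa only [← mul_sum] using hdiv.const_mul_atTop hlam
  · convert hrec k using 1
    field_simp
    ring

/-- Real-sequence form of the decaying-step-size convergence theorem for inexact PGLA
(Theorem 3.15 of the paper). -/
theorem iPGLA_decaying_step_sizes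
    (lam C M : ℝ) (hlam : 0 < lam) (hC : 0 ≤ C)
    (γ : ℕ → ℝ) (hγpos : ∀ k, 0 < γ k)
    (hγmono : ∀ k : ℕ, γ (k + 1) ≤ γ k ∧ γ k / (1 + lam) ≤ γ (k + 1))
    (hγstep : ∀ k, lam * γ k ≤ 1)
    (hγ0 : Tendsto γ atTop (nhds 0))
    (hdiv : Tendsto (fun K : ℕ => ∑ k ∈ Finset.range K, γ k) atTop atTop)
    (hA : ∀ K : ℕ, 1 ≤ K →
      ∑ k ∈ Finset.range K, γ k * ∏ l ∈ Finset.Ico (k + 1) K, (1 - lam * γ l) ≤ M)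
    (ε : ℕ → ℝ) (hεnn : ∀ k, 0 ≤ ε k) (hεanti : Antitone ε)
    (hε0 : Tendsto ε atTop (nhds 0))
    (W : ℕ → ℝ) (hW : ∀ k, 0 ≤ W k)
    (hrec : ∀ k, W (k + 1) ≤ (1 - lam * γ k) * W k + (γ k) ^ 2 * C + 2 * γ k * ε k) :
    Tendsto W atTop (nhds 0) :=
  iPGLA_decaying_step_sizes_general lam C hlam γ hγpos hγstep hγ0 hdiv ε hε0 W hW hrec
end

section
/- Let λ > 0, L ≥ λ and C' ≥ 1/λ. Define the sequence (γ_k)_{k≥0} recursively by γ_0 = 1/L and γ_k = min{ γ_{k−1}, max{ C'/k, γ_{k−1}/(1 + λ) } } for k ≥ 1. Then there exists a finite constant M such that for all K ≥ 1, A_K := ∑_{k=0}^{K−1} γ_k · ∏_{l=k+1}^{K−1} (1 − λγ_l) ≤ M; in fact one may take M = M' + C' where M' = ∑_{k=0}^{N} γ_k and N is an index such that γ_k = C'/k for all k > N. -/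
/-!
Once `k * lam ≥ 1`, dividing `C' / k` by `1 + lam` lands below `C' / (k + 1)`, so from then on
`γ k ≤ C' / k` is preserved, and as soon as the cap `C' / (k + 1)` is active the rule locks onto
`γ k = C' / k` for good. Both events do happen: a sequence staying above `C' / k` would be
divided by `1 + lam` at every step, and a constant positive sequence would eventually exceed
`C' / k`. For the partial sums, the terms with `k ≤ N` are bounded by `γ k`; for `N < k < K`,
`lam * C' ≥ 1` gives `1 - lam * γ l ≤ (l - 1) / l`, the product telescopes to `k / (K - 1)`, and
each of the at most `K - 1` such terms is at most `C' / (K - 1)`.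
-/

open Finset Filter Topology

theorem prod_Ico_one_sub_inv {k K : ℕ} (hk : 0 < k) (hkK : k < K) :
    ∏ l ∈ Ico (k + 1) K, (1 - (l : ℝ)⁻¹) = k / ↑(K - 1) := by
  induction K, hkK using Nat.le_induction with
  | base => simp [(Nat.cast_pos.2 hk).ne']
  | succ K hkK ih =>
    have hK : (0 : ℝ) < K := by exact_mod_cast (hk.trans hkK)
    rw [prod_Ico_succ_top hkK, ih, Nat.cast_pred (by omega), Nat.add_sub_cancel]
    have hK1 : (K : ℝ) - 1 ≠ 0 := by
      have : (k : ℝ) + 1 ≤ K := by exact_mod_cast hkK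
      have : (1 : ℝ) ≤ k := by exact_mod_cast hk
      linarith
    rw [← one_div, one_sub_div hK.ne', div_mul_div_comm, mul_comm (K - 1 : ℝ),
      mul_div_mul_right _ _ hK1]

theorem div_div_one_add_le_div_add_one {lam C m : ℝ} (hlam : 0 < lam) (hC : 0 ≤ C)
    (hm : 1 ≤ m * lam) : C / m / (1 + lam) ≤ C / (m + 1) := by
  have hm0 : 0 < m := pos_of_mul_pos_left (one_pos.trans_le hm) hlam.le
  rw [div_div]
  exact div_le_div_of_nonneg_left hC (by linarith) (by nlinarith)

def IsStepSizeRule (lam C' : ℝ) (γ : ℕ → ℝ) : Prop :=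
  ∀ k : ℕ, γ (k + 1) = min (γ k) (max (C' / (k + 1 : ℕ)) (γ k / (1 + lam)))

namespace IsStepSizeRule

variable {lam C' : ℝ} {γ : ℕ → ℝ}

theorem antitone (h : IsStepSizeRule lam C' γ) : Antitone γ :=
  antitone_nat_of_succ_le fun k => (h k).trans_le (min_le_left _ _)

theorem pos (h : IsStepSizeRule lam C' γ) (hlam : 0 < lam) (h0 : 0 < γ 0) (k : ℕ) :
    0 < γ k := by
  induction k with
  | zero => exact h0
  | succ k ih =>
    rw [h k]
    exact lt_min ih ((div_pos ih (by linarith)).trans_le (le_max_right _ _))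

theorem succ_eq_of_le_div (h : IsStepSizeRule lam C' γ) {m : ℕ}
    (hm : γ m ≤ C' / ↑(m + 1)) : γ (m + 1) = γ m := by
  rw [h m]
  exact min_eq_left (hm.trans (le_max_left _ _))

theorem succ_eq_min_of_div_le (h : IsStepSizeRule lam C' γ) {m : ℕ}
    (hm : γ m / (1 + lam) ≤ C' / ↑(m + 1)) : γ (m + 1) = min (γ m) (C' / ↑(m + 1)) := by
  rw [h m, max_eq_left hm]

theorem succ_eq_min_of_le_div (h : IsStepSizeRule lam C' γ) (hlam : 0 < lam) (hC' : 0 ≤ C')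
    {m : ℕ} (hm : 1 ≤ m * lam) (hγm : γ m ≤ C' / m) :
    γ (m + 1) = min (γ m) (C' / ↑(m + 1)) := by
  refine h.succ_eq_min_of_div_le ?_
  calc γ m / (1 + lam) ≤ C' / m / (1 + lam) := by gcongr
    _ ≤ C' / ↑(m + 1) := by exact_mod_cast div_div_one_add_le_div_add_one hlam hC' hm

theorem le_div_of_le_div (h : IsStepSizeRule lam C' γ) (hlam : 0 < lam) (hC' : 0 ≤ C')
    {n : ℕ} (hn : 1 ≤ n * lam) (hγn : γ n ≤ C' / n) {m : ℕ} (hnm : n ≤ m) :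
    γ m ≤ C' / m := by
  induction m, hnm using Nat.le_induction with
  | base => exact hγn
  | succ m hnm ih =>
    have hm : 1 ≤ m * lam := hn.trans (by gcongr)
    rw [h.succ_eq_min_of_le_div hlam hC' hm ih]
    exact min_le_right _ _

theorem eq_div_of_eq_div (h : IsStepSizeRule lam C' γ) (hlam : 0 < lam) (hC' : 0 ≤ C')
    {n : ℕ} (hn : 1 ≤ n * lam) (hγn : γ n = C' / n) {m : ℕ} (hnm : n ≤ m) :
    γ m = C' / m := by
  induction m, hnm using Nat.le_induction with
  | base => exact hγn
  | succ m hnm ih =>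
    have hm : 1 ≤ m * lam := hn.trans (by gcongr)
    have hm0 : (0 : ℝ) < m := pos_of_mul_pos_left (one_pos.trans_le hm) hlam.le
    rw [h.succ_eq_min_of_le_div hlam hC' hm ih.le, ih, min_eq_right]
    exact div_le_div_of_nonneg_left hC' hm0 (by push_cast; linarith)

theorem exists_le_div (h : IsStepSizeRule lam C' γ) (hlam : 0 < lam) (hC' : 0 < C') (n₀ : ℕ) :
    ∃ n, n₀ ≤ n ∧ γ n ≤ C' / n := by
  by_contra! habove
  set r := (1 + lam)⁻¹
  have hr0 : 0 ≤ r := inv_nonneg.2 (by linarith)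
  have hr1 : r < 1 := inv_lt_one_of_one_lt₀ (by linarith)
  have hgeom (j : ℕ) : γ (n₀ + j) ≤ r ^ j * γ n₀ := by
    refine le_geom (u := fun j => γ (n₀ + j)) hr0 j fun k _ => ?_
    have hk := (h (n₀ + k)).symm ▸ min_le_right _ _
    rcases le_max_iff.1 hk with hk | hk
    · exact absurd hk (habove _ (by omega)).not_ge
    · simpa [div_eq_inv_mul, r, add_assoc] using hk
  have hlim : Tendsto (fun j : ℕ => γ n₀ * (n₀ * r ^ j + j * r ^ j)) atTop (𝓝 0) := by
    simpa using ((tendsto_pow_atTop_nhds_zero_of_lt_one hr0 hr1).const_mul (n₀ : ℝ)).add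
      (tendsto_self_mul_const_pow_of_lt_one hr0 hr1) |>.const_mul (γ n₀)
  obtain ⟨j, hj⟩ := (hlim.eventually (gt_mem_nhds hC')).exists_forall_of_atTop
  have hpos : (0 : ℝ) < ↑(n₀ + (j + 1)) := by positivity
  have hlt := (div_lt_iff₀ hpos).1 ((habove _ (by omega)).trans_le (hgeom (j + 1)))
  have := hj (j + 1) (by omega)
  push_cast at hlt this
  linarith

theorem exists_div_lt (h : IsStepSizeRule lam C' γ) {n : ℕ} (hn : 0 < γ n) :
    ∃ m, n ≤ m ∧ C' / ↑(m + 1) < γ m := by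
  by_contra! hle
  have hconst {m : ℕ} (hnm : n ≤ m) : γ m = γ n := by
    induction m, hnm using Nat.le_induction with
    | base => rfl
    | succ m hnm ih => rw [h.succ_eq_of_le_div (hle m hnm), ih]
  have hlim : Tendsto (fun m : ℕ => C' / ↑(m + 1)) atTop (𝓝 0) :=
    (tendsto_const_div_atTop_nhds_zero_nat C').comp (tendsto_add_atTop_nat 1)
  obtain ⟨m, hm⟩ := (hlim.eventually (gt_mem_nhds hn)).exists_forall_of_atTop
  have := hle (max m n) (le_max_right _ _)
  rw [hconst (le_max_right _ _)] at this
  exact (hm _ (le_max_left _ _)).not_ge this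

theorem exists_forall_gt_eq_div (h : IsStepSizeRule lam C' γ) (hlam : 0 < lam) (hC' : 0 < C')
    (h0 : 0 < γ 0) : ∃ N : ℕ, ∀ k, N < k → γ k = C' / k := by
  set n₀ := ⌈1 / lam⌉₊
  have hn₀ {m : ℕ} (hm : n₀ ≤ m) : 1 ≤ m * lam := by
    have : 1 / lam ≤ m := (Nat.le_ceil _).trans (by exact_mod_cast hm)
    rwa [div_le_iff₀ hlam] at this
  obtain ⟨n, hn₀n, hn⟩ := h.exists_le_div hlam hC' n₀
  obtain ⟨m, hnm, hm⟩ := h.exists_div_lt (h.pos hlam h0 n)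
  have hm₀ : n₀ ≤ m := hn₀n.trans hnm
  have hγm := h.le_div_of_le_div hlam hC'.le (hn₀ hn₀n) hn hnm
  have hγm1 : γ (m + 1) = C' / ↑(m + 1) := by
    rw [h.succ_eq_min_of_le_div hlam hC'.le (hn₀ hm₀) hγm, min_eq_right hm.le]
  exact ⟨m, fun k hk => h.eq_div_of_eq_div hlam hC'.le (hn₀ (by omega)) hγm1 hk⟩

end IsStepSizeRule

section PartialSums

variable {lam C' : ℝ} {γ : ℕ → ℝ} {N : ℕ}

theorem prod_one_sub_mul_le_one (hlam : 0 ≤ lam) (hγ : ∀ l, 0 ≤ γ l)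
    (hγle : ∀ l, lam * γ l ≤ 1) (s : Finset ℕ) : ∏ l ∈ s, (1 - lam * γ l) ≤ 1 :=
  prod_le_one (fun l _ => sub_nonneg.2 (hγle l)) fun l _ => sub_le_self _ (mul_nonneg hlam (hγ l))

theorem mul_prod_one_sub_le_div (hγ : ∀ l, 0 ≤ γ l) (hγle : ∀ l, lam * γ l ≤ 1)
    (hC' : 1 ≤ lam * C') (hN : ∀ k, N < k → γ k = C' / k) {k K : ℕ} (hNk : N < k) (hkK : k < K) :
    γ k * ∏ l ∈ Ico (k + 1) K, (1 - lam * γ l) ≤ C' / ↑(K - 1) := by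
  have hk : (0 : ℝ) < k := by exact_mod_cast (show 0 < k by omega)
  have hprod : ∏ l ∈ Ico (k + 1) K, (1 - lam * γ l) ≤ ∏ l ∈ Ico (k + 1) K, (1 - (l : ℝ)⁻¹) := by
    refine prod_le_prod (fun l _ => sub_nonneg.2 (hγle l)) fun l hl => ?_
    have hl : k < l := by simp at hl; omega
    have hl0 : (0 : ℝ) < l := by exact_mod_cast (show 0 < l by omega)
    rw [hN l (by omega), mul_div_assoc', sub_le_sub_iff_left, inv_eq_one_div]
    exact div_le_div_of_nonneg_right hC' hl0.le
  calc γ k * ∏ l ∈ Ico (k + 1) K, (1 - lam * γ l)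
      ≤ γ k * (k / ↑(K - 1)) := by
        rw [← prod_Ico_one_sub_inv (by omega) hkK]
        exact mul_le_mul_of_nonneg_left hprod (hγ k)
    _ = C' / ↑(K - 1) := by rw [hN k hNk, div_mul_div_cancel₀ hk.ne']

theorem sum_mul_prod_one_sub_le (hlam : 0 ≤ lam) (hγ : ∀ l, 0 ≤ γ l)
    (hγle : ∀ l, lam * γ l ≤ 1) (hC' : 1 ≤ lam * C') (hN : ∀ k, N < k → γ k = C' / k) (K : ℕ) :
    ∑ k ∈ range K, γ k * ∏ l ∈ Ico (k + 1) K, (1 - lam * γ l) ≤ ∑ k ∈ range (N + 1), γ k + C' := by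
  have hC'0 : 0 ≤ C' := (pos_of_mul_pos_right (one_pos.trans_le hC') hlam).le
  have hhead {s : Finset ℕ} (hs : s ⊆ range (N + 1)) :
      ∑ k ∈ s, γ k * ∏ l ∈ Ico (k + 1) K, (1 - lam * γ l) ≤ ∑ k ∈ range (N + 1), γ k :=
    (sum_le_sum fun k _ =>
      mul_le_of_le_one_right (hγ k) (prod_one_sub_mul_le_one hlam hγ hγle _)).trans
        (sum_le_sum_of_subset_of_nonneg hs fun k _ _ => hγ k)
  rcases le_or_gt K (N + 1) with hK | hK
  · linarith [hhead (range_subset_range.2 hK)]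
  rw [← sum_range_add_sum_Ico _ hK.le]
  have hK1 : (0 : ℝ) < ↑(K - 1) := by exact_mod_cast (show 0 < K - 1 by omega)
  have htail : ∑ k ∈ Ico (N + 1) K, γ k * ∏ l ∈ Ico (k + 1) K, (1 - lam * γ l) ≤ C' :=
    calc _ ≤ #(Ico (N + 1) K) • (C' / ↑(K - 1)) := sum_le_card_nsmul _ _ _ fun k hk =>
          mul_prod_one_sub_le_div hγ hγle hC' hN (by simp at hk; omega) (by simp at hk; omega)
      _ ≤ ↑(K - 1) * (C' / ↑(K - 1)) := by
          rw [Nat.card_Ico, nsmul_eq_mul]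
          gcongr
          omega
      _ = C' := mul_div_cancel₀ _ hK1.ne'
  linarith [hhead subset_rfl]

end PartialSums

/-- The explicit step-size rule γ₀ = 1/L, γ_k = min{γ_{k-1}, max{C'/k, γ_{k-1}/(1+λ)}}
satisfies the partial-sum boundedness condition A_K ≤ M = M' + C' with
M' = ∑_{k=0}^{N} γ_k, where N is such that γ_k = C'/k for all k > N
(Remark 3.16 of the paper). -/
theorem stepsize_rule_partial_sums_bounded
    (lam L C' : ℝ) (hlam : 0 < lam) (hL : lam ≤ L) (hC' : 1 / lam ≤ C')
    (γ : ℕ → ℝ) (hγ0 : γ 0 = 1 / L)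
    (hγ : ∀ k : ℕ, γ (k + 1)
      = min (γ k) (max (C' / (k + 1 : ℕ)) (γ k / (1 + lam)))) :
    ∃ N : ℕ, (∀ k : ℕ, N < k → γ k = C' / k) ∧
      ∀ K : ℕ, 1 ≤ K →
        ∑ k ∈ Finset.range K, γ k * ∏ l ∈ Finset.Ico (k + 1) K, (1 - lam * γ l)
          ≤ (∑ k ∈ Finset.range (N + 1), γ k) + C' := by
  have hrule : IsStepSizeRule lam C' γ := hγ
  have hL0 : 0 < L := hlam.trans_le hL
  have hlamC' : 1 ≤ lam * C' := by rwa [div_le_iff₀' hlam] at hC'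
  have hpos := hrule.pos hlam (by rw [hγ0]; positivity)
  have hγle (k : ℕ) : lam * γ k ≤ 1 :=
    calc lam * γ k ≤ lam * γ 0 := by gcongr; exact hrule.antitone (Nat.zero_le k)
      _ = lam / L := by rw [hγ0, mul_one_div]
      _ ≤ 1 := (div_le_one hL0).2 hL
  obtain ⟨N, hN⟩ := hrule.exists_forall_gt_eq_div hlam (one_div_pos.2 hlam |>.trans_le hC') (hpos 0)
  exact ⟨N, hN, fun K _ => sum_mul_prod_one_sub_le hlam.le (fun k => (hpos k).le) hγle hlamC' hN K⟩
end

section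
/- Let λ > 0, L ≥ λ and C' ≥ 1/λ. Define the sequence (γ_k)_{k≥0} recursively by γ_0 = 1/L and γ_k = min{ γ_{k−1}, max{ C'/k, γ_{k−1}/(1 + λ) } } for k ≥ 1. Then: (a) the sequence satisfies γ_{k−1} ≥ γ_k ≥ γ_{k−1}/(1 + λ) for all k ≥ 1 and 0 < γ_k ≤ 1/L for all k; (b) there exists N such that γ_k = C'/k for all k > N; and (c) consequently γ_k → 0 and ∑_{k=0}^{∞} γ_k = ∞. -/
open Filter Finset Topology

/-! A step never increases `γ`, and it lands on the target `C' / k` unless that lies above `γ`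
or below `γ / (1 + λ)`. Once `C' / k ≤ γ 0`, the sequence never drops below the target. Since
`C' / k` decays more slowly than the geometric rate `1 / (1 + λ)` as soon as `k λ ≥ 1`, the
sequence cannot keep dividing by `1 + λ` forever, so it meets the target, and from then on it
follows `C' / k` exactly; divergence of the harmonic series finishes the proof. -/

def StepSizeRule (r : ℝ) (a γ : ℕ → ℝ) : Prop :=
  ∀ k, γ (k + 1) = min (γ k) (max (a (k + 1)) (γ k / r))

namespace StepSizeRule

variable {r : ℝ} {a γ : ℕ → ℝ}

theorem succ_le (h : StepSizeRule r a γ) (k : ℕ) : γ (k + 1) ≤ γ k := by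
  rw [h k]
  exact min_le_left _ _

theorem antitone (h : StepSizeRule r a γ) : Antitone γ :=
  antitone_nat_of_succ_le h.succ_le

theorem pos (h : StepSizeRule r a γ) (hr : 0 < r) (h0 : 0 < γ 0) : ∀ k, 0 < γ k
  | 0 => h0
  | k + 1 => by
    have hk := h.pos hr h0 k
    rw [h k]
    exact lt_min hk (lt_max_of_lt_right (div_pos hk hr))

theorem div_le_succ (h : StepSizeRule r a γ) (hr : 1 ≤ r) {k : ℕ} (hk : 0 ≤ γ k) :
    γ k / r ≤ γ (k + 1) := by
  rw [h k]
  exact le_min (div_le_self hk hr) (le_max_right _ _)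

theorem min_le_succ (h : StepSizeRule r a γ) (k : ℕ) :
    min (γ k) (a (k + 1)) ≤ γ (k + 1) := by
  rw [h k]
  exact min_le_min_left _ (le_max_left _ _)

theorem min_le (h : StepSizeRule r a γ) (ha : AntitoneOn a (Set.Ici 1)) {k : ℕ} (hk : 1 ≤ k) :
    min (γ 0) (a k) ≤ γ k := by
  induction k, hk using Nat.le_induction with
  | base => exact h.min_le_succ 0
  | succ k hk ih =>
    calc min (γ 0) (a (k + 1)) = min (min (γ 0) (a k)) (a (k + 1)) := by
          rw [min_assoc, min_eq_right (ha hk (hk.trans k.le_succ) k.le_succ)]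
      _ ≤ min (γ k) (a (k + 1)) := min_le_min_right _ ih
      _ ≤ γ (k + 1) := h.min_le_succ k

theorem succ_eq_of_eq (h : StepSizeRule r a γ) {k : ℕ} (hanti : a (k + 1) ≤ a k)
    (hslow : a k / r ≤ a (k + 1)) (hk : γ k = a k) : γ (k + 1) = a (k + 1) := by
  rw [h k, hk, max_eq_left hslow, min_eq_right hanti]

theorem succ_le_div_of_ne (h : StepSizeRule r a γ) {k : ℕ} (hle : a (k + 1) ≤ γ (k + 1))
    (hne : γ (k + 1) ≠ a (k + 1)) : γ (k + 1) ≤ γ k / r :=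
  (le_max_iff.1 ((h k).trans_le (min_le_right _ _))).resolve_left fun hmax =>
    hne (le_antisymm hmax hle)

/-- Off the target, each step divides `γ` by at least `r`, so a target decaying more slowly than
`r⁻ⁿ` must be hit. -/
theorem exists_eq (h : StepSizeRule r a γ) (hr : 0 < r) {m : ℕ}
    (hle : ∀ k, m ≤ k → a k ≤ γ k)
    (hgrowth : Tendsto (fun n => a (m + n) * r ^ n) atTop atTop) :
    ∃ k, m ≤ k ∧ γ k = a k := by
  by_contra! hne
  have hgeom : ∀ n, γ (m + n) * r ^ n ≤ γ m := by
    intro n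
    induction n with
    | zero => simp
    | succ n ih =>
      have hdecay := h.succ_le_div_of_ne (hle _ (by omega)) (hne (m + n + 1) (by omega))
      rw [le_div_iff₀ hr] at hdecay
      calc γ (m + (n + 1)) * r ^ (n + 1)
          = γ (m + n + 1) * r * r ^ n := by rw [← add_assoc, pow_succ]; ring
        _ ≤ γ (m + n) * r ^ n := by gcongr
        _ ≤ γ m := ih
  obtain ⟨n, hn⟩ := (hgrowth.eventually_gt_atTop (γ m)).exists
  exact (hn.trans_le (by gcongr; exact hle _ (by omega))).not_ge (hgeom n)

theorem eq_of_le (h : StepSizeRule r a γ) {m : ℕ} (hanti : AntitoneOn a (Set.Ici m))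
    (hslow : ∀ k, m ≤ k → a k / r ≤ a (k + 1)) (hm : γ m = a m) {k : ℕ} (hk : m ≤ k) :
    γ k = a k := by
  induction k, hk using Nat.le_induction with
  | base => exact hm
  | succ k hk ih => exact h.succ_eq_of_eq (hanti hk (hk.trans k.le_succ) k.le_succ) (hslow k hk) ih

theorem exists_forall_ge_eq (h : StepSizeRule r a γ) (hr : 0 < r)
    (hanti : AntitoneOn a (Set.Ici 1)) {m : ℕ} (hm : 1 ≤ m) (ham : a m ≤ γ 0)
    (hslow : ∀ k, m ≤ k → a k / r ≤ a (k + 1))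
    (hgrowth : Tendsto (fun n => a (m + n) * r ^ n) atTop atTop) :
    ∃ N, ∀ k, N ≤ k → γ k = a k := by
  have hle : ∀ k, m ≤ k → a k ≤ γ k := fun k hk => by
    have hmin := h.min_le hanti (hm.trans hk)
    rwa [min_eq_right ((hanti hm (hm.trans hk) hk).trans ham)] at hmin
  obtain ⟨N, hmN, hN⟩ := h.exists_eq hr hle hgrowth
  exact ⟨N, fun k hk => h.eq_of_le (hanti.mono (Set.Ici_subset_Ici.2 (hm.trans hmN)))
    (fun j hj => hslow j (hmN.trans hj)) hN hk⟩

end StepSizeRule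

theorem antitoneOn_const_div_natCast {c : ℝ} (hc : 0 ≤ c) :
    AntitoneOn (fun k : ℕ => c / k) (Set.Ici 1) := fun _ hi _ _ hij =>
  div_le_div_of_nonneg_left hc (Nat.cast_pos.2 hi) (Nat.cast_le.2 hij)

theorem const_div_natCast_div_le {c lam : ℝ} (hc : 0 ≤ c) {k : ℕ} (hk : 1 ≤ k * lam) :
    c / k / (1 + lam) ≤ c / (k + 1 : ℕ) := by
  rw [div_div, Nat.cast_succ]
  exact div_le_div_of_nonneg_left hc k.cast_add_one_pos (by rw [mul_one_add]; linarith)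

theorem tendsto_const_div_natCast_add_mul_pow_atTop {c r : ℝ} (hc : 0 < c) (hr : 1 < r)
    (m : ℕ) :
    Tendsto (fun n : ℕ => c / (m + n : ℕ) * r ^ n) atTop atTop := by
  have hr0 : 0 < r := one_pos.trans hr
  have hs0 : 0 ≤ r⁻¹ := inv_nonneg.2 hr0.le
  have hs1 : r⁻¹ < 1 := inv_lt_one_of_one_lt₀ hr
  have hlin : Tendsto (fun n : ℕ => ((m + n : ℕ) : ℝ) * r⁻¹ ^ n) atTop (𝓝 0) := by
    simpa [add_mul] using ((tendsto_pow_atTop_nhds_zero_of_lt_one hs0 hs1).const_mul (m : ℝ)).add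
      (tendsto_self_mul_const_pow_of_lt_one hs0 hs1)
  have hlin' : Tendsto (fun n : ℕ => ((m + n : ℕ) : ℝ) * r⁻¹ ^ n) atTop (𝓝[>] 0) :=
    tendsto_nhdsWithin_iff.2 ⟨hlin, (eventually_gt_atTop 0).mono fun n hn =>
      mul_pos (Nat.cast_pos.2 (by omega)) (pow_pos (inv_pos.2 hr0) n)⟩
  refine (hlin'.inv_tendsto_nhdsGT_zero.const_mul_atTop hc).congr fun n => ?_
  simp only [Pi.inv_apply, mul_inv, inv_pow, inv_inv]
  ring

theorem tendsto_sum_range_atTop_of_eventuallyEq_const_div {c : ℝ} (hc : c ≠ 0) {f : ℕ → ℝ}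
    (hf : ∀ k, 0 ≤ f k) (hfc : f =ᶠ[atTop] fun k => c / k) :
    Tendsto (fun K => ∑ k ∈ range K, f k) atTop atTop := by
  refine (not_summable_iff_tendsto_nat_atTop_of_nonneg hf).1 fun hs => ?_
  refine Real.not_summable_natCast_inv ((summable_mul_left_iff hc).1 ?_)
  exact (hs.congr_atTop hfc).congr fun k => div_eq_mul_inv c k

/-- The explicit step-size rule γ₀ = 1/L, γ_k = min{γ_{k-1}, max{C'/k, γ_{k-1}/(1+λ)}}
satisfies the monotonicity, decay and divergence conditions of the decaying-step-size
convergence theorem (Remark 3.16 of the paper). -/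
theorem stepsize_rule_properties
    (lam L C' : ℝ) (hlam : 0 < lam) (hL : lam ≤ L) (hC' : 1 / lam ≤ C')
    (γ : ℕ → ℝ) (hγ0 : γ 0 = 1 / L)
    (hγ : ∀ k : ℕ, γ (k + 1)
      = min (γ k) (max (C' / (k + 1 : ℕ)) (γ k / (1 + lam)))) :
    (∀ k : ℕ, γ (k + 1) ≤ γ k ∧ γ k / (1 + lam) ≤ γ (k + 1)) ∧
    (∀ k : ℕ, 0 < γ k ∧ γ k ≤ 1 / L) ∧
    (∃ N : ℕ, ∀ k : ℕ, N < k → γ k = C' / k) ∧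
    Tendsto γ atTop (nhds 0) ∧
    Tendsto (fun K : ℕ => ∑ k ∈ Finset.range K, γ k) atTop atTop := by
  have hL0 : 0 < L := hlam.trans_le hL
  have hC0 : 0 < C' := (one_div_pos.2 hlam).trans_le hC'
  have h : StepSizeRule (1 + lam) (fun k => C' / k) γ := hγ
  have hpos := h.pos (by linarith) (hγ0 ▸ one_div_pos.2 hL0)
  have hdecay := tendsto_const_div_atTop_nhds_zero_nat C'
  obtain ⟨m, hm⟩ := eventually_atTop.1 <| (eventually_ge_atTop 1).and <|
    ((tendsto_natCast_atTop_atTop.atTop_mul_const hlam).eventually_ge_atTop 1).and <|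
    hdecay.eventually_le_const (one_div_pos.2 hL0)
  obtain ⟨hm1, -, hmL⟩ := hm m le_rfl
  obtain ⟨N, hN⟩ := h.exists_forall_ge_eq (by linarith) (antitoneOn_const_div_natCast hC0.le)
    hm1 (hγ0 ▸ hmL) (fun k hk => const_div_natCast_div_le hC0.le (hm k hk).2.1)
    (tendsto_const_div_natCast_add_mul_pow_atTop hC0 (by linarith) m)
  have hev : γ =ᶠ[atTop] fun k => C' / k := eventually_atTop.2 ⟨N, hN⟩
  exact ⟨fun k => ⟨h.succ_le k, h.div_le_succ (by linarith) (hpos k).le⟩,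
    fun k => ⟨hpos k, hγ0 ▸ h.antitone k.zero_le⟩, ⟨N, fun k hk => hN k hk.le⟩,
    hdecay.congr' hev.symm,
    tendsto_sum_range_atTop_of_eventuallyEq_const_div hC0.ne' (fun k => (hpos k).le) hev⟩
end

section
/- Let E be a real Hilbert space, let G : E → ℝ be convex and lower semicontinuous, let y ∈ E, γ > 0, and define φ : E → ℝ by φ(z) = ‖y − z‖²/(2γ). Then for every ε ≥ 0 and every z ∈ E: p ∈ ∂_ε (G + φ)(z) if and only if there exist ε₁, ε₂ ≥ 0 with ε₁ + ε₂ = ε and vectors p₁ ∈ ∂_{ε₁} G(z), p₂ ∈ ∂_{ε₂} φ(z) with p = p₁ + p₂. -/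
/-!
For the forward direction, `F w = G w + ‖y - w‖² / (2γ) - ⟪p, w⟫` is `γ⁻¹`-strongly convex,
lower semicontinuous, and bounded below by `F z - ε` (the `ε`-subgradient inequality), so it
attains its minimum at some `u`: a minimizing sequence is Cauchy by strong convexity, and lower
semicontinuity passes the infimum to its limit. First-order optimality at `u` gives the exact
subgradient `p - γ⁻¹ (u - y) ∈ ∂G(u)`, which is an `ε₁`-subgradient of `G` at `z` with `ε₁` its
linearization error; the gradient `γ⁻¹ (u - y)` of the quadratic at `u` is an `ε₂`-subgradient
of it at `z` with `ε₂ = ‖u - z‖² / (2γ)`. The inequality `F z - ε ≤ F u` is exactly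
`ε₁ + ε₂ ≤ ε`, and the slack goes into `ε₁`. The reverse direction adds the two inequalities.
-/

open RealInnerProductSpace Set Filter Topology

/-- `p ∈ ∂_ε f(x)`. -/
def HasEpsSubgradientAt {E : Type*} [NormedAddCommGroup E] [InnerProductSpace ℝ E]
    (f : E → ℝ) (p : E) (ε : ℝ) (x : E) : Prop :=
  ∀ w, f w ≥ f x + ⟪p, w - x⟫ - ε

section EpsSubgradient

variable {E : Type*} [NormedAddCommGroup E] [InnerProductSpace ℝ E]
  {f g : E → ℝ} {p q u x z : E} {δ ε ε' : ℝ}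

theorem HasEpsSubgradientAt.add (hf : HasEpsSubgradientAt f p ε x)
    (hg : HasEpsSubgradientAt g q ε' x) : HasEpsSubgradientAt (f + g) (p + q) (ε + ε') x := by
  intro w
  simp only [Pi.add_apply, inner_add_left]
  linarith [hf w, hg w]

theorem HasEpsSubgradientAt.rebase (h : HasEpsSubgradientAt f p δ u)
    (he : f z - f u - ⟪p, z - u⟫ + δ ≤ ε) : HasEpsSubgradientAt f p ε z := by
  intro w
  have hsplit : ⟪p, w - u⟫ = ⟪p, w - z⟫ + ⟪p, z - u⟫ := by
    rw [← inner_add_right, sub_add_sub_cancel]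
  linarith [h w]

theorem norm_sub_sq_div_eq (y u z w : E) (γ : ℝ) :
    ‖y - w‖ ^ 2 / (2 * γ) = ‖y - z‖ ^ 2 / (2 * γ) + ⟪γ⁻¹ • (u - y), w - z⟫
      - ‖u - z‖ ^ 2 / (2 * γ) + ‖w - u‖ ^ 2 / (2 * γ) := by
  rw [real_inner_smul_left]
  simp only [← real_inner_self_eq_norm_sq, inner_sub_left, inner_sub_right, real_inner_comm]
  ring

theorem hasEpsSubgradientAt_norm_sub_sq_div (y u z : E) {γ : ℝ} (hγ : 0 ≤ γ) :
    HasEpsSubgradientAt (fun w ↦ ‖y - w‖ ^ 2 / (2 * γ)) (γ⁻¹ • (u - y))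
      (‖u - z‖ ^ 2 / (2 * γ)) z := by
  intro w
  have hw : 0 ≤ ‖w - u‖ ^ 2 / (2 * γ) := by positivity
  linarith [norm_sub_sq_div_eq y u z w γ]

theorem strongConvexOn_norm_sub_sq_div_sub_inner (y p : E) (γ : ℝ) :
    StrongConvexOn univ γ⁻¹ fun w ↦ ‖y - w‖ ^ 2 / (2 * γ) - ⟪p, w⟫ := by
  rw [strongConvexOn_iff_convex]
  refine (((innerₗ E (-(γ⁻¹ • y + p))).convexOn convex_univ).add_const
    (‖y‖ ^ 2 / (2 * γ))).congr fun w _ ↦ ?_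
  simp only [Pi.add_apply, innerₗ_apply_apply, inner_neg_left, inner_add_left,
    real_inner_smul_left, norm_sub_sq_real]
  ring

theorem hasFDerivAt_norm_sub_sq_div_sub_inner (y p u : E) (γ : ℝ) :
    HasFDerivAt (fun w ↦ ‖y - w‖ ^ 2 / (2 * γ) - ⟪p, w⟫) (innerSL ℝ (γ⁻¹ • (u - y) - p)) u := by
  have h := ((((hasFDerivAt_id u).const_sub y).norm_sq).const_mul (2 * γ)⁻¹).sub
    (innerSL ℝ p).hasFDerivAt
  refine (h.congr_fderiv ?_).congr_of_eventuallyEq (Eventually.of_forall fun w ↦ ?_)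
  · ext d
    simp only [sub_apply, smul_apply, ContinuousLinearMap.comp_neg, ContinuousLinearMap.comp_id,
      map_sub, map_smul, neg_sub, coe_innerSL_apply, id_eq, nsmul_eq_mul, smul_eq_mul]
    ring
  · simp only [coe_innerSL_apply, id_eq, Pi.sub_apply]
    ring

end EpsSubgradient

theorem LowerSemicontinuous.le_of_tendsto {α β ι : Type*} [TopologicalSpace α] [LinearOrder β]
    [TopologicalSpace β] [OrderTopology β] [DenselyOrdered β] {f : α → β} {l : Filter ι}
    [l.NeBot] {x : ι → α} {u : α} {c : β} (hf : LowerSemicontinuous f)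
    (hx : Tendsto x l (𝓝 u)) (hfx : Tendsto (f ∘ x) l (𝓝 c)) : f u ≤ c :=
  le_of_forall_gt_imp_ge_of_dense fun _ hc' ↦
    (hf.isClosed_preimage _).mem_of_tendsto hx (hfx.eventually (eventually_le_nhds hc'))

section StrongConvex

variable {E : Type*} [NormedAddCommGroup E] [NormedSpace ℝ E] {f : E → ℝ} {m c η : ℝ}

theorem ConvexOn.add_strongConvexOn {g : E → ℝ} {s : Set E} (hf : ConvexOn ℝ s f)
    (hg : StrongConvexOn s m g) : StrongConvexOn s m (f + g) := by
  have h := (uniformConvexOn_zero.2 hf).add hg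
  rwa [zero_add] at h

theorem StrongConvexOn.norm_sub_sq_le (hf : StrongConvexOn univ m f) (hc : ∀ w, c ≤ f w)
    {a b : E} (ha : f a ≤ c + η) (hb : f b ≤ c + η) : m / 8 * ‖a - b‖ ^ 2 ≤ η := by
  have hmid := hf.2 (mem_univ a) (mem_univ b) (by norm_num : (0 : ℝ) ≤ 1 / 2)
    (by norm_num : (0 : ℝ) ≤ 1 / 2) (by norm_num)
  simp only [smul_eq_mul] at hmid
  linarith [hc ((1 / 2 : ℝ) • a + (1 / 2 : ℝ) • b)]

theorem StrongConvexOn.cauchySeq_of_tendsto (hf : StrongConvexOn univ m f) (hm : 0 < m)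
    (hc : ∀ w, c ≤ f w) {x : ℕ → E} (hfx : Tendsto (f ∘ x) atTop (𝓝 c)) : CauchySeq x := by
  refine Metric.cauchySeq_iff'.2 fun δ hδ ↦ ?_
  have hη : c < c + m * δ ^ 2 / 16 := by
    have : 0 < m * δ ^ 2 := by positivity
    linarith
  obtain ⟨N, hN⟩ := eventually_atTop.1 (hfx.eventually (eventually_le_nhds hη))
  refine ⟨N, fun n hn ↦ ?_⟩
  have hsq := hf.norm_sub_sq_le hc (hN n hn) (hN N le_rfl)
  have hlt : ‖x n - x N‖ ^ 2 < δ ^ 2 := by nlinarith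
  rw [dist_eq_norm]
  exact (pow_lt_pow_iff_left₀ (norm_nonneg _) hδ.le two_ne_zero).1 hlt

theorem StrongConvexOn.exists_isMinOn [CompleteSpace E] (hf : StrongConvexOn univ m f)
    (hm : 0 < m) (hlsc : LowerSemicontinuous f) (hbdd : BddBelow (range f)) :
    ∃ u, IsMinOn f univ u := by
  obtain ⟨c, -, hc, hcf⟩ := exists_seq_tendsto_sInf (range_nonempty f) hbdd
  choose x hx using hcf
  have hlow : ∀ w, sInf (range f) ≤ f w := fun w ↦ csInf_le hbdd (mem_range_self w)
  have hfx : Tendsto (f ∘ x) atTop (𝓝 (sInf (range f))) := by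
    simpa only [Function.comp_def, hx] using hc
  obtain ⟨u, hu⟩ := cauchySeq_tendsto_of_complete (hf.cauchySeq_of_tendsto hm hlow hfx)
  exact ⟨u, fun w _ ↦ (hlsc.le_of_tendsto hu hfx).trans (hlow w)⟩

end StrongConvex

theorem ConvexOn.sub_le_of_isMinOn_add {E : Type*} [NormedAddCommGroup E] [NormedSpace ℝ E]
    {g h : E → ℝ} {h' : E →L[ℝ] ℝ} {s : Set E} {u v : E} (hg : ConvexOn ℝ s g)
    (hmin : IsMinOn (g + h) s u) (hh : HasFDerivAt h h' u) (hu : u ∈ s) (hv : v ∈ s) :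
    g u - h' (v - u) ≤ g v := by
  suffices g u - g v ≤ h' (v - u) by linarith
  refine ge_of_tendsto (hh.hasLineDerivAt (v - u)).tendsto_slope_zero_right ?_
  filter_upwards [Ioo_mem_nhdsGT one_pos] with t ⟨ht0, ht1⟩
  have hseg : u + t • (v - u) = (1 - t) • u + t • v := by module
  have ht' : 0 ≤ 1 - t := by linarith
  have hconv : g (u + t • (v - u)) ≤ (1 - t) * g u + t * g v :=
    hseg ▸ hg.2 hu hv ht' ht0.le (sub_add_cancel 1 t)
  have hmin_t : g u + h u ≤ g (u + t • (v - u)) + h (u + t • (v - u)) :=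
    isMinOn_iff.1 hmin _ (hseg ▸ hg.1 hu hv ht' ht0.le (sub_add_cancel 1 t))
  rw [smul_eq_mul, le_inv_mul_iff₀ ht0]
  linarith

theorem ConvexOn.hasEpsSubgradientAt_neg_of_isMinOn_add {E : Type*} [NormedAddCommGroup E]
    [InnerProductSpace ℝ E] {g h : E → ℝ} {q u : E} (hg : ConvexOn ℝ univ g)
    (hmin : IsMinOn (g + h) univ u) (hh : HasFDerivAt h (innerSL ℝ q) u) :
    HasEpsSubgradientAt g (-q) 0 u := by
  intro v
  have hopt := hg.sub_le_of_isMinOn_add hmin hh (mem_univ u) (mem_univ v)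
  rw [innerSL_apply_apply] at hopt
  rw [inner_neg_left]
  linarith

theorem eps_subdifferential_sum_convex_quadratic_general
    {E : Type*} [NormedAddCommGroup E] [InnerProductSpace ℝ E] [CompleteSpace E]
    (G : E → ℝ) (hGconv : ConvexOn ℝ Set.univ G) (hGlsc : LowerSemicontinuous G)
    (y : E) (γ : ℝ) (hγ : 0 < γ) (ε : ℝ) (z p : E) :
    (∀ w : E,
        G w + ‖y - w‖ ^ 2 / (2 * γ)
          ≥ G z + ‖y - z‖ ^ 2 / (2 * γ) + ⟪p, w - z⟫ - ε) ↔
      ∃ ε₁ ε₂ : ℝ, 0 ≤ ε₁ ∧ 0 ≤ ε₂ ∧ ε₁ + ε₂ = ε ∧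
        ∃ p₁ p₂ : E,
          (∀ w : E, G w ≥ G z + ⟪p₁, w - z⟫ - ε₁) ∧
          (∀ w : E, ‖y - w‖ ^ 2 / (2 * γ)
              ≥ ‖y - z‖ ^ 2 / (2 * γ) + ⟪p₂, w - z⟫ - ε₂) ∧
          p = p₁ + p₂ := by
  refine ⟨fun hp ↦ ?_, fun ⟨ε₁, ε₂, _, _, hsum, p₁, p₂, h₁, h₂, hp⟩ ↦
    hp ▸ hsum ▸ HasEpsSubgradientAt.add h₁ h₂⟩
  set h : E → ℝ := fun w ↦ ‖y - w‖ ^ 2 / (2 * γ) - ⟪p, w⟫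
  have hlow : ∀ w, G z + h z - ε ≤ G w + h w := fun w ↦ by
    simp only [h, inner_sub_right] at hp ⊢
    linarith [hp w]
  obtain ⟨u, hu⟩ := (hGconv.add_strongConvexOn (strongConvexOn_norm_sub_sq_div_sub_inner y p γ))
    |>.exists_isMinOn (inv_pos.2 hγ) (hGlsc.add (by fun_prop : Continuous h).lowerSemicontinuous)
      ⟨_, forall_mem_range.2 hlow⟩
  have hG : HasEpsSubgradientAt G (p - γ⁻¹ • (u - y)) 0 u := by
    simpa using hGconv.hasEpsSubgradientAt_neg_of_isMinOn_add hu
      (hasFDerivAt_norm_sub_sq_div_sub_inner y p u γ)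
  have hbudget : G z - G u - ⟪p - γ⁻¹ • (u - y), z - u⟫ + ‖u - z‖ ^ 2 / (2 * γ) ≤ ε := by
    have hexpand := norm_sub_sq_div_eq y u u z γ
    rw [sub_self, norm_zero, zero_pow two_ne_zero, zero_div, sub_zero, norm_sub_rev z u] at hexpand
    simp only [h, inner_sub_left, inner_sub_right] at hlow hexpand ⊢
    linarith [hlow u]
  refine ⟨ε - ‖u - z‖ ^ 2 / (2 * γ), _, by linarith [hG z], by positivity, by ring, _, _,
    hG.rebase (by linarith), hasEpsSubgradientAt_norm_sub_sq_div y u z hγ.le, by abel⟩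

/-- Decomposition of the ε-subdifferential of the sum of a convex lsc function and a
quadratic (Lemma 3.3 of the paper). -/
theorem eps_subdifferential_sum_convex_quadratic
    {E : Type*} [NormedAddCommGroup E] [InnerProductSpace ℝ E] [CompleteSpace E]
    (G : E → ℝ) (hGconv : ConvexOn ℝ Set.univ G) (hGlsc : LowerSemicontinuous G)
    (y : E) (γ : ℝ) (hγ : 0 < γ) (ε : ℝ) (hε : 0 ≤ ε) (z p : E) :
    (∀ w : E,
        G w + ‖y - w‖ ^ 2 / (2 * γ)
          ≥ G z + ‖y - z‖ ^ 2 / (2 * γ) + ⟪p, w - z⟫ - ε) ↔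
      ∃ ε₁ ε₂ : ℝ, 0 ≤ ε₁ ∧ 0 ≤ ε₂ ∧ ε₁ + ε₂ = ε ∧
        ∃ p₁ p₂ : E,
          (∀ w : E, G w ≥ G z + ⟪p₁, w - z⟫ - ε₁) ∧
          (∀ w : E, ‖y - w‖ ^ 2 / (2 * γ)
              ≥ ‖y - z‖ ^ 2 / (2 * γ) + ⟪p₂, w - z⟫ - ε₂) ∧
          p = p₁ + p₂ :=
  eps_subdifferential_sum_convex_quadratic_general G hGconv hGlsc y γ hγ ε z p
end

section
/- Let E be a real inner product space, z ∈ E, γ > 0, τ > 0, ε ≥ 0, and let G : E → ℝ be defined by G(x) = (1/(2γ))·‖x − z‖². Then for all x, y ∈ E: x ≈^ε prox_{τG}(y), i.e. (y − x)/τ ∈ ∂_ε G(x), if and only if x ∈ { (γy + τ(z + r))/(γ + τ) : r ∈ E, ‖r‖ ≤ √(2γε) }. -/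
open RealInnerProductSpace

/-- Inexact proximal points of the quadratic G(x) = ‖x - z‖²/(2γ)
(Example 2.2 of the paper). -/
theorem inexact_prox_of_quadratic
    {E : Type*} [NormedAddCommGroup E] [InnerProductSpace ℝ E]
    (z : E) (γ τ ε : ℝ) (hγ : 0 < γ) (hτ : 0 < τ) (hε : 0 ≤ ε) (x y : E) :
    (∀ w : E,
        1 / (2 * γ) * ‖w - z‖ ^ 2
          ≥ 1 / (2 * γ) * ‖x - z‖ ^ 2 + ⟪(1 / τ) • (y - x), w - x⟫ - ε) ↔
      ∃ r : E, ‖r‖ ≤ Real.sqrt (2 * γ * ε) ∧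
        x = (1 / (γ + τ)) • (γ • y + τ • (z + r)) := by
  set p : E := (1 / τ) • (y - x) with hp
  have hγ0 : γ ≠ 0 := ne_of_gt hγ
  have hτ0 : τ ≠ 0 := ne_of_gt hτ
  have hγτ : γ + τ ≠ 0 := by positivity
  have hpos : (0:ℝ) < 1 / (2 * γ) := by positivity
  have h1 : ∀ a : E, ‖a - γ • p‖ ^ 2
      = ‖a‖ ^ 2 - 2 * (γ * ⟪p, a⟫) + γ ^ 2 * ‖p‖ ^ 2 := by
    intro a
    rw [norm_sub_sq_real, real_inner_smul_right, norm_smul, Real.norm_eq_abs,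
      mul_pow, sq_abs, real_inner_comm]
  have key : ∀ w : E,
      1 / (2 * γ) * ‖w - z‖ ^ 2 - (1 / (2 * γ) * ‖x - z‖ ^ 2 + ⟪p, w - x⟫ - ε)
        = 1 / (2 * γ) * ‖w - z - γ • p‖ ^ 2
          - 1 / (2 * γ) * ‖x - z - γ • p‖ ^ 2 + ε := by
    intro w
    have h2 : ⟪p, w - x⟫ = ⟪p, w - z⟫ - ⟪p, x - z⟫ := by
      rw [← inner_sub_right]
      congr 1
      abel
    rw [h1 (w - z), h1 (x - z), h2]
    field_simp
    ring
  constructor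
  · intro h
    refine ⟨x - z - γ • p, ?_, ?_⟩
    · have hk := key (z + γ • p)
      have hz : z + γ • p - z - γ • p = 0 := by abel
      rw [hz, norm_zero] at hk
      have hh := h (z + γ • p)
      rw [hp] at hh hk ⊢
      have h5 : ‖x - z - γ • ((1 / τ) • (y - x))‖ ^ 2 * (1 / (2 * γ)) ≤ ε := by
        nlinarith [hk, hh]
      have hb : ‖x - z - γ • ((1 / τ) • (y - x))‖ ^ 2 ≤ 2 * γ * ε := by
        have h6 := mul_le_mul_of_nonneg_left h5 (le_of_lt (show (0:ℝ) < 2 * γ by positivity))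
        have h7 : 2 * γ * (‖x - z - γ • ((1 / τ) • (y - x))‖ ^ 2 * (1 / (2 * γ)))
            = ‖x - z - γ • ((1 / τ) • (y - x))‖ ^ 2 := by
          field_simp
        linarith [h6, h7.symm.le, h7.le]
      calc ‖x - z - γ • ((1 / τ) • (y - x))‖
          = Real.sqrt (‖x - z - γ • ((1 / τ) • (y - x))‖ ^ 2) := by
            rw [Real.sqrt_sq (norm_nonneg _)]
        _ ≤ Real.sqrt (2 * γ * ε) := Real.sqrt_le_sqrt hb
    · rw [hp]
      match_scalars <;> field_simp <;> ring
  · rintro ⟨r, hr, hx⟩ w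
    have hr2 : x - z - γ • p = r := by
      rw [hp, hx]
      match_scalars <;> field_simp <;> ring
    have hb : ‖r‖ ^ 2 ≤ 2 * γ * ε := by
      have h3 := pow_le_pow_left₀ (norm_nonneg r) hr 2
      rwa [Real.sq_sqrt (by positivity)] at h3
    have hk := key w
    rw [hr2] at hk
    have h6 : 1 / (2 * γ) * ‖r‖ ^ 2 ≤ ε := by
      have := mul_le_mul_of_nonneg_left hb (le_of_lt hpos)
      have h7 : 1 / (2 * γ) * (2 * γ * ε) = ε := by field_simp
      linarith
    have h8 : 0 ≤ 1 / (2 * γ) * ‖w - z - γ • p‖ ^ 2 :=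
      mul_nonneg hpos.le (sq_nonneg _)
    linarith [hk, h6, h8]
end

section
/- Let τ > 0 and ε > 0, and define h : ℝ → ℝ by h(t) = (t − τ)/2 + √((t − τ)²/4 + ετ). Then for all x, y ∈ ℝ: y ≈^ε prox_{τ|·|}(x), i.e. (x − y)/τ ∈ ∂_ε |·|(y), if and only if y ∈ [ max(−h(−x), x − τ), min(h(x), x + τ) ]. -/
/-!
A slope `p` is an `ε`-subgradient of `|·|` at `y` exactly when `|p| ≤ 1` (otherwise the affine
minorant eventually beats `|·|`) and the minorant loses at most `ε` at the kink, `|y| - p y ≤ ε`.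
For `p = (x - y)/τ` the first condition reads `|x - y| ≤ τ`. Multiplied by `τ`, the second is
a quadratic inequality `z² - b z ≤ ετ` in `z = |y|`, with `b = x - τ` when `y ≥ 0` and
`b = -x - τ` when `y < 0`; its nonnegative solutions are `z ≤ h(x)`, resp. `z ≤ h(-x)`.
-/

open Real

def epsSubdifferential (G : ℝ → ℝ) (ε x : ℝ) : Set ℝ :=
  {p | ∀ w, G w ≥ G x + p * (w - x) - ε}

theorem abs_le_one_of_forall_mul_sub_le_abs {p C : ℝ} (h : ∀ w, p * w - C ≤ |w|) :
    |p| ≤ 1 := by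
  by_contra! hp
  have hgap : 0 < p ^ 2 - |p| := by nlinarith [sq_abs p]
  set t := (|C| + 1) / (p ^ 2 - |p|)
  have ht0 : 0 < t := by positivity
  have htp : t * (p ^ 2 - |p|) = |C| + 1 := div_mul_cancel₀ _ hgap.ne'
  have hw := h (t * p)
  rw [abs_mul, abs_of_pos ht0] at hw
  nlinarith [le_abs_self C]

theorem mem_epsSubdifferential_abs_iff {ε y p : ℝ} :
    p ∈ epsSubdifferential (|·|) ε y ↔ |p| ≤ 1 ∧ |y| - p * y ≤ ε := by
  constructor
  · intro h
    refine ⟨abs_le_one_of_forall_mul_sub_le_abs (C := p * y - |y| + ε) fun w => ?_, ?_⟩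
    · linarith [h w]
    · have h0 := h 0
      simp only [abs_zero, zero_sub] at h0
      linarith
  · rintro ⟨hp, hy⟩ w
    have hpw : p * w ≤ |w| :=
      calc p * w ≤ |p| * |w| := (le_abs_self _).trans (abs_mul p w).le
        _ ≤ |w| := mul_le_of_le_one_left (abs_nonneg w) hp
    show |w| ≥ |y| + p * (w - y) - ε
    linarith

theorem add_sqrt_nonneg_of_nonneg {b c : ℝ} (hc : 0 ≤ c) : 0 ≤ b / 2 + √(b ^ 2 / 4 + c) := by
  have : |b / 2| ≤ √(b ^ 2 / 4 + c) := abs_le_sqrt (by nlinarith)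
  linarith [neg_abs_le (b / 2)]

theorem sq_sub_mul_le_iff_le_root {b c z : ℝ} (hc : 0 ≤ c) (hz : 0 ≤ z) :
    z ^ 2 - b * z ≤ c ↔ z ≤ b / 2 + √(b ^ 2 / 4 + c) := by
  set s := √(b ^ 2 / 4 + c)
  have hs : s ^ 2 = b ^ 2 / 4 + c := sq_sqrt (by positivity)
  have hs0 : 0 ≤ s := sqrt_nonneg _
  have hfac : z ^ 2 - b * z - c = (z - (b / 2 + s)) * (z - (b / 2 + s) + 2 * s) := by
    linear_combination hs
  have hbs : b / 2 ≤ s := (le_abs_self _).trans (abs_le_sqrt (by nlinarith))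
  constructor
  · intro h
    by_contra! hlt
    nlinarith [mul_pos (sub_pos.2 hlt) (by linarith : 0 < z - (b / 2 + s) + 2 * s)]
  · intro h
    have hcofactor : 0 ≤ z - (b / 2 + s) + 2 * s := by linarith
    nlinarith [mul_nonpos_of_nonpos_of_nonneg (sub_nonpos.2 h) hcofactor]

theorem mul_abs_sub_mul_le_iff {τ x y c : ℝ} (hc : 0 ≤ c) :
    τ * |y| - (x - y) * y ≤ c ↔
      -((-x - τ) / 2 + √((-x - τ) ^ 2 / 4 + c)) ≤ y ∧ y ≤ (x - τ) / 2 + √((x - τ) ^ 2 / 4 + c) := by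
  have hneg := add_sqrt_nonneg_of_nonneg (b := -x - τ) hc
  have hpos := add_sqrt_nonneg_of_nonneg (b := x - τ) hc
  rcases le_or_gt 0 y with hy | hy
  · rw [abs_of_nonneg hy, ← sq_sub_mul_le_iff_le_root hc hy]
    constructor
    · intro h
      exact ⟨by linarith, by linarith⟩
    · intro h
      linarith [h.2]
  · rw [abs_of_neg hy, neg_le, ← sq_sub_mul_le_iff_le_root hc (neg_nonneg.2 hy.le)]
    constructor
    · intro h
      exact ⟨by linarith, by linarith⟩
    · intro h
      linarith [h.1]

/-- Inexact proximal points of the absolute value function on ℝ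
(Example 2.3 of the paper). -/
theorem inexact_prox_of_abs (τ ε : ℝ) (hτ : 0 < τ) (hε : 0 < ε)
    (h : ℝ → ℝ)
    (hh : ∀ t : ℝ, h t = (t - τ) / 2 + Real.sqrt ((t - τ) ^ 2 / 4 + ε * τ)) :
    ∀ x y : ℝ,
      (∀ w : ℝ, |w| ≥ |y| + (x - y) / τ * (w - y) - ε) ↔
        y ∈ Set.Icc (max (-h (-x)) (x - τ)) (min (h x) (x + τ)) := by
  intro x y
  have hscale : |y| - (x - y) / τ * y = (τ * |y| - (x - y) * y) / τ := by field_simp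
  change (x - y) / τ ∈ epsSubdifferential (|·|) ε y ↔ _
  rw [mem_epsSubdifferential_abs_iff, abs_div, abs_of_pos hτ, div_le_one hτ, abs_sub_le_iff,
    hscale, div_le_iff₀ hτ, mul_abs_sub_mul_le_iff (by positivity), Set.mem_Icc, max_le_iff,
    le_min_iff, hh, hh]
  constructor
  · rintro ⟨⟨h₁, h₂⟩, h₃, h₄⟩
    exact ⟨⟨h₃, by linarith⟩, h₄, by linarith⟩
  · rintro ⟨⟨h₁, h₂⟩, h₃, h₄⟩
    exact ⟨⟨by linarith, by linarith⟩, h₁, h₃⟩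
end

section
/- Let E and Y be real Hilbert spaces, B : E → Y a continuous linear map with adjoint B*, H : Y → ℝ a function, and define G : E → ℝ by G(x) = H(Bx). Let γ > 0, ε ≥ 0, y ∈ E, z ∈ Y, and let c ∈ ℝ satisfy the Fenchel–Young-type bound H(w) ≥ ⟪w, z⟫ − c for all w ∈ Y. Set x̂ := y − γ·B*z. If the duality gap satisfies G(x̂) + (1/(2γ))‖x̂ − y‖² + (γ/2)‖B*z‖² − ⟪B*z, y⟫ + c ≤ ε, then B*z ∈ ∂_ε G(x̂); equivalently, x̂ ≈^ε prox_{γG}(y), i.e. G(x) ≥ G(x̂) + ⟪B*z, x − x̂⟫ − ε for all x ∈ E. -/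
open RealInnerProductSpace

/-- A small duality gap certifies an ε-approximate proximal point
(Lemma 3.7 of the paper). -/
theorem duality_gap_certifies_inexact_prox
    {E Y : Type*} [NormedAddCommGroup E] [InnerProductSpace ℝ E] [CompleteSpace E]
    [NormedAddCommGroup Y] [InnerProductSpace ℝ Y] [CompleteSpace Y]
    (B : E →L[ℝ] Y) (Bs : Y →L[ℝ] E) (hBs : Bs = ContinuousLinearMap.adjoint B)
    (H : Y → ℝ) (G : E → ℝ) (hG : ∀ x : E, G x = H (B x))
    (γ ε : ℝ) (hγ : 0 < γ) (hε : 0 ≤ ε) (y : E) (z : Y) (c : ℝ)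
    (hFY : ∀ w : Y, H w ≥ ⟪w, z⟫ - c)
    (hgap : G (y - γ • Bs z) + 1 / (2 * γ) * ‖(y - γ • Bs z) - y‖ ^ 2
        + γ / 2 * ‖Bs z‖ ^ 2 - ⟪Bs z, y⟫ + c ≤ ε) :
    ∀ x : E, G x ≥ G (y - γ • Bs z) + ⟪Bs z, x - (y - γ • Bs z)⟫ - ε := by
  intro x
  have h1 : G x ≥ ⟪Bs z, x⟫ - c := by
    rw [hG, hBs, ContinuousLinearMap.adjoint_inner_left]
    have := hFY (B x)
    rwa [real_inner_comm] at this
  have hnorm : ‖(y - γ • Bs z) - y‖ ^ 2 = γ ^ 2 * ‖Bs z‖ ^ 2 := by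
    rw [sub_sub_cancel_left, norm_neg, norm_smul, mul_pow, Real.norm_eq_abs,
      sq_abs]
  have hin : ⟪Bs z, x - (y - γ • Bs z)⟫
      = ⟪Bs z, x⟫ - ⟪Bs z, y⟫ + γ * ‖Bs z‖ ^ 2 := by
    rw [inner_sub_right, inner_sub_right, real_inner_smul_right,
      real_inner_self_eq_norm_sq]
    ring
  rw [hnorm] at hgap
  have heq : 1 / (2 * γ) * (γ ^ 2 * ‖Bs z‖ ^ 2) = γ / 2 * ‖Bs z‖ ^ 2 := by
    field_simp
  rw [hin]
  linarith
end

section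
/- Let d be a natural number, let E = EuclideanSpace ℝ (Fin d), let L ≥ 0 and let F : E → ℝ be differentiable with gradient ∇F : E → E that is L-Lipschitz. Let γ > 0 and let μ be the product measure on E whose coordinates are i.i.d. real Gaussian measures with mean 0 and variance 2γ. Then for every x ∈ E, the function z ↦ F(x + z) is μ-integrable and ∫ F(x + z) dμ(z) − F(x) ≤ L·d·γ. -/
/-!
Along the segment from `x` to `x + z`, the Lipschitz gradient gives the two-sided quadratic bound
`|F (x + z) - F x - ⟪∇F x, z⟫| ≤ L / 2 * ‖z‖ ^ 2`. Integrating it against a centred measure with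
finite second moment kills the linear term, so the expected increase is at most `L / 2` times the
second moment, which is `2γ d` for the Gaussian `N(0, 2γ I_d)`.
-/

open MeasureTheory ProbabilityTheory Set
open scoped NNReal RealInnerProductSpace

section LipschitzGradient

variable {E : Type*} [NormedAddCommGroup E] [InnerProductSpace ℝ E] [CompleteSpace E]
  {L : ℝ≥0} {F : E → ℝ} {gradF : E → E}

theorem abs_sub_sub_inner_le_of_lipschitzWith_gradient
    (hF : ∀ y, HasGradientAt F (gradF y) y) (hLip : LipschitzWith L gradF) (x z : E) :
    |F (x + z) - F x - ⟪gradF x, z⟫| ≤ L / 2 * ‖z‖ ^ 2 := by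
  set f : ℝ → ℝ := fun t => F (x + t • z) - F x - t * ⟪gradF x, z⟫
  have hf : ∀ t, HasDerivAt f ⟪gradF (x + t • z) - gradF x, z⟫ t := by
    intro t
    have hline : HasDerivAt (fun s : ℝ => x + s • z) z t := by
      simpa using ((hasDerivAt_id t).smul_const z).const_add x
    have := (((hF _).hasFDerivAt.comp_hasDerivAt t hline).sub_const (F x)).sub
      ((hasDerivAt_id t).mul_const ⟪gradF x, z⟫)
    exact this.congr_deriv (by simp [inner_sub_left])
  have hB : ∀ t, HasDerivAt (fun t => L / 2 * ‖z‖ ^ 2 * t ^ 2) (L * ‖z‖ ^ 2 * t) t := fun t =>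
    ((hasDerivAt_pow 2 t).const_mul (L / 2 * ‖z‖ ^ 2)).congr_deriv (by norm_num; ring)
  have hbound : ∀ t ∈ Ico (0 : ℝ) 1,
      ‖⟪gradF (x + t • z) - gradF x, z⟫‖ ≤ L * ‖z‖ ^ 2 * t := by
    rintro t ⟨ht, -⟩
    calc ‖⟪gradF (x + t • z) - gradF x, z⟫‖ ≤ ‖gradF (x + t • z) - gradF x‖ * ‖z‖ :=
          norm_inner_le_norm _ _
      _ ≤ L * ‖t • z‖ * ‖z‖ := by
          gcongr
          simpa using hLip.norm_sub_le (x + t • z) x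
      _ = L * ‖z‖ ^ 2 * t := by
          rw [norm_smul, Real.norm_of_nonneg ht]; ring
  have := image_norm_le_of_norm_deriv_right_le_deriv_boundary
    (fun t _ => (hf t).continuousAt.continuousWithinAt) (fun t _ => (hf t).hasDerivWithinAt)
    (by simp [f]) hB hbound (right_mem_Icc.2 zero_le_one)
  simpa [f] using this

variable [MeasurableSpace E] [BorelSpace E] {μ : Measure E}

theorem integrable_comp_add_of_lipschitzWith_gradient [IsFiniteMeasure μ]
    (hF : ∀ y, HasGradientAt F (gradF y) y) (hLip : LipschitzWith L gradF)
    (hμ : MemLp id 2 μ) (x : E) :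
    Integrable (fun z => F (x + z)) μ := by
  have hcont : Continuous F := continuous_iff_continuousAt.2 fun y => (hF y).continuousAt
  have hmajorant : Integrable (fun z => |F x| + ‖gradF x‖ * ‖z‖ + L / 2 * ‖z‖ ^ 2) μ :=
    ((integrable_const _).add ((hμ.integrable one_le_two).norm.const_mul _)).add
      ((hμ.integrable_norm_pow two_ne_zero).const_mul _)
  refine hmajorant.mono' (hcont.comp (continuous_const_add x)).aestronglyMeasurable
    (Filter.Eventually.of_forall fun z => ?_)
  have hrem := abs_le.1 (abs_sub_sub_inner_le_of_lipschitzWith_gradient hF hLip x z)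
  have hinner := abs_le.1 (abs_real_inner_le_norm (gradF x) z)
  rw [Real.norm_eq_abs, abs_le]
  constructor <;> linarith [neg_abs_le (F x), le_abs_self (F x)]

theorem integral_comp_add_le_of_lipschitzWith_gradient [IsProbabilityMeasure μ]
    (hF : ∀ y, HasGradientAt F (gradF y) y) (hLip : LipschitzWith L gradF)
    (hμ : MemLp id 2 μ) (hmean : ∫ z, z ∂μ = 0) (x : E) :
    ∫ z, F (x + z) ∂μ ≤ F x + L / 2 * ∫ z, ‖z‖ ^ 2 ∂μ := by
  have hid : Integrable id μ := hμ.integrable one_le_two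
  have hinner : Integrable (fun z => ⟪gradF x, z⟫) μ := hid.const_inner _
  have hlin : Integrable (fun z => F x + ⟪gradF x, z⟫) μ := (integrable_const _).add hinner
  have hsq : Integrable (fun z => L / 2 * ‖z‖ ^ 2) μ :=
    (hμ.integrable_norm_pow two_ne_zero).const_mul _
  calc ∫ z, F (x + z) ∂μ ≤ ∫ z, F x + ⟪gradF x, z⟫ + L / 2 * ‖z‖ ^ 2 ∂μ := by
        refine integral_mono (integrable_comp_add_of_lipschitzWith_gradient hF hLip hμ x)
          (hlin.add hsq) fun z => ?_
        have := abs_le.1 (abs_sub_sub_inner_le_of_lipschitzWith_gradient hF hLip x z)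
        linarith
    _ = F x + L / 2 * ∫ z, ‖z‖ ^ 2 ∂μ := by
        rw [integral_add hlin hsq,
          integral_add (integrable_const _) hinner, integral_inner (f := fun z => z) hid, hmean,
          integral_const_mul]
        simp

end LipschitzGradient

section EuclideanProduct

variable {ι : Type*} [Fintype ι] {ν : ι → Measure ℝ} [∀ i, IsProbabilityMeasure (ν i)]

theorem memLp_id_map_toLp_pi (h : ∀ i, MemLp id 2 (ν i)) :
    MemLp id 2 ((Measure.pi ν).map (MeasurableEquiv.toLp 2 (ι → ℝ))) := by
  rw [MeasurableEquiv.memLp_map_measure_iff, memLp_piLp_iff]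
  exact fun i => (h i).comp_measurePreserving (measurePreserving_eval ν i)

theorem integral_id_map_toLp_pi (h : ∀ i, Integrable id (ν i)) :
    ∫ z, z ∂(Measure.pi ν).map (MeasurableEquiv.toLp 2 (ι → ℝ)) =
      WithLp.toLp 2 fun i => ∫ t, t ∂ν i := by
  rw [integral_map_equiv]
  ext i
  rw [eval_integral_piLp]
  · exact integral_eval
  · exact fun j => integrable_eval (h j)

theorem integral_norm_sq_map_toLp_pi (h : ∀ i, Integrable (fun t => t ^ 2) (ν i)) :
    ∫ z, ‖z‖ ^ 2 ∂(Measure.pi ν).map (MeasurableEquiv.toLp 2 (ι → ℝ)) =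
      ∑ i, ∫ t, t ^ 2 ∂ν i := by
  rw [integral_map_equiv]
  simp only [EuclideanSpace.real_norm_sq_eq, MeasurableEquiv.coe_toLp]
  rw [integral_finsetSum _ fun i _ => integrable_comp_eval (f := fun t => t ^ 2) (h i)]
  exact Finset.sum_congr rfl fun i _ =>
    integral_comp_eval (μ := ν) (f := fun t => t ^ 2) (continuous_pow 2).aestronglyMeasurable

end EuclideanProduct

theorem integral_sq_gaussianReal_zero (v : ℝ≥0) : ∫ t, t ^ 2 ∂gaussianReal 0 v = v := by
  rw [← variance_id_gaussianReal (μ := 0), variance_of_integral_eq_zero aemeasurable_id]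
  · rfl
  · exact integral_id_gaussianReal

/-- The expected increase of a potential with L-Lipschitz gradient after convolution with
the Gaussian diffusion step N(0, 2γ I_d) is at most L·d·γ (Lemma 3.11 of the paper). -/
theorem potential_increase_gaussian_step
    (d : ℕ) (L γ : ℝ) (hL : 0 ≤ L) (hγ : 0 < γ)
    (F : EuclideanSpace ℝ (Fin d) → ℝ)
    (gradF : EuclideanSpace ℝ (Fin d) → EuclideanSpace ℝ (Fin d))
    (hF : ∀ x, HasGradientAt F (gradF x) x)
    (hLip : LipschitzWith L.toNNReal gradF)
    (μ : Measure (EuclideanSpace ℝ (Fin d)))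
    (hμ : μ = Measure.map (MeasurableEquiv.toLp 2 (Fin d → ℝ))
      (Measure.pi fun _ : Fin d => gaussianReal 0 (2 * γ).toNNReal))
    (x : EuclideanSpace ℝ (Fin d)) :
    Integrable (fun zz => F (x + zz)) μ ∧
      (∫ zz, F (x + zz) ∂μ) - F x ≤ L * d * γ := by
  set v := (2 * γ).toNNReal
  have hv : (v : ℝ) = 2 * γ := Real.coe_toNNReal _ (by positivity)
  have : IsProbabilityMeasure μ := hμ ▸ Measure.isProbabilityMeasure_map (by fun_prop)
  subst hμ
  have hmom := memLp_id_map_toLp_pi fun _ : Fin d => memLp_id_gaussianReal (μ := 0) (v := v) 2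
  have hmean := integral_id_map_toLp_pi fun _ : Fin d =>
    (memLp_id_gaussianReal (μ := 0) (v := v) 1).integrable le_rfl
  have hsecond := integral_norm_sq_map_toLp_pi fun _ : Fin d =>
    (memLp_id_gaussianReal (μ := 0) (v := v) 2).integrable_sq
  simp only [integral_id_gaussianReal, ← Pi.zero_def, WithLp.toLp_zero] at hmean
  simp only [integral_sq_gaussianReal_zero, hv, Finset.sum_const, Finset.card_univ,
    Fintype.card_fin, nsmul_eq_mul] at hsecond
  refine ⟨integrable_comp_add_of_lipschitzWith_gradient hF hLip hmom x, ?_⟩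
  have := integral_comp_add_le_of_lipschitzWith_gradient hF hLip hmom hmean x
  rw [hsecond, Real.coe_toNNReal _ hL] at this
  linarith
end
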